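/- Along a trajectory of the multi-population incentive dynamics, if x̂ is an ISS (the ISS inequality holds for each population i at the current state x ≠ x̂), then the derivative of V(x) = Σ_i D_KL(x̂_i||x_i) is strictly negative; the derivative of each summand equals Σ_α ((x_{iα} - x̂_{iα})/x_{iα}) φ_{iα}(x). -/

import Mathlib

/-!
Writing `v_α = φ_α - x_α Σ_β φ_β` for the velocity of population `i`, the chain rule gives
`d/dt Σ_α x̂_α log (x̂_α / x_α) = -Σ_α x̂_α v_α / x_α = Σ_β φ_β - Σ_α x̂_α φ_α / x_α`, the second
step using `Σ_α x̂_α = 1`. Since `Σ_β φ_β = Σ_α x_α φ_α / x_α`, this is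
`Σ_α ((x_α - x̂_α) / x_α) φ_α`, and it is negative exactly when the ISS inequality holds for `i`.
Summing over the (nonempty, since `x ≠ x̂`) set of populations gives `dV/dt < 0`.
-/

open Real Finset

/-- Valid also for `a = 0`, where both sides vanish although `log (0 / b) ≠ log 0 - log b`. -/
lemma Real.mul_log_div_eq (a : ℝ) {b : ℝ} (hb : b ≠ 0) :
    a * log (a / b) = a * log a - a * log b := by
  rcases eq_or_ne a 0 with rfl | ha
  · simp
  · rw [log_div ha hb, mul_sub]

section Population

variable {α : Type*} [Fintype α]

lemma hasDerivAt_sum_mul_log_div (p : α → ℝ) {y : ℝ → α → ℝ} {y' : α → ℝ} {t : ℝ}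
    (hy : ∀ s a, y s a ≠ 0) (hderiv : ∀ a, HasDerivAt (fun s => y s a) (y' a) t) :
    HasDerivAt (fun s => ∑ a, p a * log (p a / y s a)) (∑ a, p a * -(y' a / y t a)) t := by
  simp_rw [Real.mul_log_div_eq _ (hy _ _)]
  refine HasDerivAt.fun_sum fun a _ => ?_
  simpa using ((hderiv a).log (hy t a)).const_mul (p a) |>.const_sub (p a * log (p a))

lemma sum_sub_div_mul_eq {p y : α → ℝ} (f : α → ℝ) (hy : ∀ a, y a ≠ 0) :
    ∑ a, (y a - p a) / y a * f a = ∑ a, y a * (f a / y a) - ∑ a, p a * (f a / y a) := by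
  rw [← sum_sub_distrib]
  refine sum_congr rfl fun a _ => ?_
  field_simp [hy a]

/-- The time derivative of `Σ_α p_α log (p_α / y_α)` along the replicator-type velocity
`f_α - y_α Σ_β f_β`. -/
lemma sum_mul_neg_replicator_div_eq {p y : α → ℝ} (f : α → ℝ) (hp : ∑ a, p a = 1)
    (hy : ∀ a, y a ≠ 0) :
    ∑ a, p a * -((f a - y a * ∑ b, f b) / y a) = ∑ a, (y a - p a) / y a * f a := by
  have hflow : ∀ a, p a * -((f a - y a * ∑ b, f b) / y a) =
      p a * ∑ b, f b - p a * (f a / y a) := fun a => by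
    field_simp [hy a]
    ring
  have hself : ∀ a, y a * (f a / y a) = f a := fun a => mul_div_cancel₀ _ (hy a)
  simp only [hflow, sum_sub_div_mul_eq f hy, hself, sum_sub_distrib, ← sum_mul, hp, one_mul]

lemma sum_sub_div_mul_neg {p y f : α → ℝ} (hy : ∀ a, y a ≠ 0)
    (hlt : ∑ a, y a * (f a / y a) < ∑ a, p a * (f a / y a)) :
    ∑ a, (y a - p a) / y a * f a < 0 := by
  rw [sum_sub_div_mul_eq f hy]
  exact sub_neg.mpr hlt

end Population

theorem multi_population_iss_lyapunov_general {ι : Type*} [Fintype ι]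
    {α : ι → Type*} [∀ i, Fintype (α i)]
    (xh : ∀ i, α i → ℝ) (hxh1 : ∀ i, ∑ a, xh i a = 1)
    (φ : (∀ i, α i → ℝ) → ∀ i, α i → ℝ)
    (x : ℝ → ∀ i, α i → ℝ)
    (hpos : ∀ t i a, 0 < x t i a)
    (hode : ∀ t i a, HasDerivAt (fun s => x s i a)
      (φ (x t) i a - x t i a * ∑ b, φ (x t) i b) t)
    (t : ℝ) (hne : x t ≠ xh)
    (hISS : ∀ i, (∑ a, x t i a * (φ (x t) i a / x t i a)) <
                  ∑ a, xh i a * (φ (x t) i a / x t i a)) :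
    (∀ i, HasDerivAt (fun s => ∑ a, xh i a * Real.log (xh i a / x s i a))
      (∑ a, ((x t i a - xh i a) / x t i a) * φ (x t) i a) t) ∧
    HasDerivAt (fun s => ∑ i, ∑ a, xh i a * Real.log (xh i a / x s i a))
      (∑ i, ∑ a, ((x t i a - xh i a) / x t i a) * φ (x t) i a) t ∧
    (∑ i, ∑ a, ((x t i a - xh i a) / x t i a) * φ (x t) i a) < 0 := by
  have hx : ∀ s i a, x s i a ≠ 0 := fun s i a => (hpos s i a).ne'
  have hderiv : ∀ i, HasDerivAt (fun s => ∑ a, xh i a * Real.log (xh i a / x s i a))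
      (∑ a, ((x t i a - xh i a) / x t i a) * φ (x t) i a) t := fun i => by
    rw [← sum_mul_neg_replicator_div_eq _ (hxh1 i) (hx t i)]
    exact hasDerivAt_sum_mul_log_div (xh i) (fun s => hx s i) (hode t i)
  obtain ⟨i₀, -⟩ := Function.ne_iff.mp hne
  exact ⟨hderiv, HasDerivAt.fun_sum fun i _ => hderiv i,
    sum_neg (fun i _ => sum_sub_div_mul_neg (hx t i) (hISS i)) ⟨i₀, mem_univ i₀⟩⟩

theorem multi_population_iss_lyapunov {ι : Type*} [Fintype ι]
    {α : ι → Type*} [∀ i, Fintype (α i)]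
    (xh : ∀ i, α i → ℝ) (hxh0 : ∀ i a, 0 < xh i a) (hxh1 : ∀ i, ∑ a, xh i a = 1)
    (φ : (∀ i, α i → ℝ) → ∀ i, α i → ℝ)
    (x : ℝ → ∀ i, α i → ℝ)
    (hpos : ∀ t i a, 0 < x t i a) (hsum : ∀ t i, ∑ a, x t i a = 1)
    (hode : ∀ t i a, HasDerivAt (fun s => x s i a)
      (φ (x t) i a - x t i a * ∑ b, φ (x t) i b) t)
    (t : ℝ) (hne : x t ≠ xh)
    (hISS : ∀ i, (∑ a, x t i a * (φ (x t) i a / x t i a)) <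
                  ∑ a, xh i a * (φ (x t) i a / x t i a)) :
    (∀ i, HasDerivAt (fun s => ∑ a, xh i a * Real.log (xh i a / x s i a))
      (∑ a, ((x t i a - xh i a) / x t i a) * φ (x t) i a) t) ∧
    HasDerivAt (fun s => ∑ i, ∑ a, xh i a * Real.log (xh i a / x s i a))
      (∑ i, ∑ a, ((x t i a - xh i a) / x t i a) * φ (x t) i a) t ∧
    (∑ i, ∑ a, ((x t i a - xh i a) / x t i a) * φ (x t) i a) < 0 :=
  multi_population_iss_lyapunov_general xh hxh1 φ x hpos hode t hne hISS
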